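/- arXiv:2409.10301 — 2 statements merged into one kernel-verified Lean document; each statement's English description precedes it below -/
import Mathlib

section
/- Let Σ and Σ' be real symmetric positive definite n×n matrices, μ ∈ ℝ^n, q > 0, and define H(x) = q·xᵀΣx − μᵀx. Set x* = (1/(2q))·Σ⁻¹μ and x' = (1/(2q))·(Σ')⁻¹μ. Then H(x') − H(x*) = (1/(4q))·μᵀ[(Σ')⁻¹(Σ − Σ')Σ⁻¹(Σ − Σ')(Σ')⁻¹]μ. -/
/-!
Since `2qΣx* = μ`, the point `x*` is stationary for the quadratic `H`, so the Taylor expansion of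
`H` at `x*` is exact: `H(x) - H(x*) = q (x - x*)ᵀ Σ (x - x*)`. The resolvent identity
`Σ'⁻¹ - Σ⁻¹ = Σ⁻¹ (Σ - Σ') Σ'⁻¹` writes `x' - x* = (1/(2q)) Σ⁻¹ (Σ - Σ') Σ'⁻¹ μ`, and substituting
this into the quadratic form, with `Σ⁻¹ Σ Σ⁻¹ = Σ⁻¹` and the symmetry of `Σ` and `Σ'`, gives the
formula.
-/

open Matrix

def markowitzObjective {ι R : Type*} [Fintype ι] [CommRing R] (q : R) (S : Matrix ι ι R)
    (μ x : ι → R) : R :=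
  q * (x ⬝ᵥ S *ᵥ x) - μ ⬝ᵥ x

section
variable {ι R : Type*} [Fintype ι] [CommRing R]

theorem Matrix.IsSymm.dotProduct_mulVec_comm {S : Matrix ι ι R} (hS : S.IsSymm) (x y : ι → R) :
    x ⬝ᵥ S *ᵥ y = y ⬝ᵥ S *ᵥ x := by
  simpa only [hS.eq] using dotProduct_transpose_mulVec S x y

theorem markowitzObjective_sub_of_stationary {q : R} {S : Matrix ι ι R} {μ x₀ : ι → R}
    (hS : S.IsSymm) (hx₀ : (2 * q) • (S *ᵥ x₀) = μ) (x : ι → R) :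
    markowitzObjective q S μ x - markowitzObjective q S μ x₀
      = q * ((x - x₀) ⬝ᵥ S *ᵥ (x - x₀)) := by
  subst hx₀
  simp only [markowitzObjective, mulVec_sub, dotProduct_sub, sub_dotProduct, smul_dotProduct,
    smul_eq_mul, dotProduct_comm (S *ᵥ x₀), hS.dotProduct_mulVec_comm x₀ x]
  ring

theorem Matrix.mulVec_dotProduct_mulVec_mulVec (M S : Matrix ι ι R) (v : ι → R) :
    (M *ᵥ v) ⬝ᵥ S *ᵥ (M *ᵥ v) = v ⬝ᵥ (Mᵀ * S * M) *ᵥ v := by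
  rw [← mulVec_mulVec, ← mulVec_mulVec, dotProduct_transpose_mulVec, dotProduct_comm]

end

section
variable {ι : Type*} [Fintype ι] [DecidableEq ι] {R : Type*} [CommRing R]

theorem Matrix.inv_sub_inv' {A B : Matrix ι ι R} (h : IsUnit A ↔ IsUnit B) :
    A⁻¹ - B⁻¹ = B⁻¹ * (B - A) * A⁻¹ := by
  rw [← neg_sub, inv_sub_inv h.symm, ← neg_sub A B, mul_neg, neg_mul]

theorem Matrix.IsSymm.dotProduct_mulVec_inv_sub_inv {A B : Matrix ι ι R} (hA : A.IsSymm)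
    (hB : B.IsSymm) (hAu : IsUnit A) (hBu : IsUnit B) (v : ι → R) :
    ((B⁻¹ - A⁻¹) *ᵥ v) ⬝ᵥ A *ᵥ ((B⁻¹ - A⁻¹) *ᵥ v)
      = v ⬝ᵥ (B⁻¹ * (A - B) * A⁻¹ * (A - B) * B⁻¹) *ᵥ v := by
  rw [inv_sub_inv' (iff_of_true hBu hAu), mulVec_dotProduct_mulVec_mulVec]
  congr 2
  simp only [transpose_mul, transpose_sub, transpose_nonsing_inv, hA.eq, hB.eq, Matrix.mul_assoc,
    nonsing_inv_mul_cancel_left _ _ ((isUnit_iff_isUnit_det A).mp hAu)]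

end

/-- Exact expression for the gap between the Markowitz objective evaluated at the minimizer
`x' = (1/(2q))·(Σ')⁻¹μ` of the decomposed problem and at the true minimizer
`x* = (1/(2q))·Σ⁻¹μ`:
`H(x') − H(x*) = (1/(4q))·μᵀ[(Σ')⁻¹(Σ − Σ')Σ⁻¹(Σ − Σ')(Σ')⁻¹]μ`. -/
theorem markowitz_gap_formula {n : ℕ} (S S' : Matrix (Fin n) (Fin n) ℝ)
    (hS : S.PosDef) (hS' : S'.PosDef)
    (μ : Fin n → ℝ) (q : ℝ) (hq : 0 < q)
    (H : (Fin n → ℝ) → ℝ) (hH : ∀ x, H x = q * (x ⬝ᵥ S *ᵥ x) - μ ⬝ᵥ x)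
    (xstar x' : Fin n → ℝ)
    (hxstar : xstar = (1 / (2 * q)) • (S⁻¹ *ᵥ μ))
    (hx' : x' = (1 / (2 * q)) • (S'⁻¹ *ᵥ μ)) :
    H x' - H xstar
      = (1 / (4 * q)) * (μ ⬝ᵥ (S'⁻¹ * (S - S') * S⁻¹ * (S - S') * S'⁻¹) *ᵥ μ) := by
  have hSsymm : S.IsSymm := isHermitian_iff_isSymm.mp hS.1
  have hS'symm : S'.IsSymm := isHermitian_iff_isSymm.mp hS'.1
  have hstar_stationary : (2 * q) • (S *ᵥ xstar) = μ := by
    rw [hxstar, mulVec_smul, mulVec_mulVec,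
      mul_nonsing_inv S ((isUnit_iff_isUnit_det S).mp hS.isUnit), one_mulVec, smul_smul,
      mul_one_div_cancel (by positivity), one_smul]
  have hdiff : x' - xstar = (1 / (2 * q)) • ((S'⁻¹ - S⁻¹) *ᵥ μ) := by
    rw [hx', hxstar, ← smul_sub, sub_mulVec]
  rw [show H = markowitzObjective q S μ from funext hH,
    markowitzObjective_sub_of_stationary hSsymm hstar_stationary, hdiff, mulVec_smul,
    smul_dotProduct, dotProduct_smul,
    hSsymm.dotProduct_mulVec_inv_sub_inv hS'symm hS.isUnit hS'.isUnit, smul_eq_mul, smul_eq_mul]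
  field_simp
  ring
end

section
/- (Gap between optimal direct and decomposed solutions.) Let Σ be a real symmetric positive definite n×n matrix, let Σ' be a block-diagonal real matrix with K ≥ 1 symmetric positive definite diagonal blocks Σ'₁, …, Σ'_K each of whose smallest eigenvalue is at least Γ > 0, let μ ∈ ℝ^n, q > 0, and define H(x) = q·xᵀΣx − μᵀx. Let x* = (1/(2q))·Σ⁻¹μ be the global minimizer of H and x' = (1/(2q))·(Σ')⁻¹μ be the global minimizer of the decomposed objective H'(x) = q·xᵀΣ'x − μᵀx. Then |H(x*) − H(x')| ≤ (‖Σ⁻¹‖·‖μ‖²/(4q))·(K·‖Σ − Σ'‖/Γ)², where ‖·‖ denotes the Euclidean norm on vectors and the spectral norm on matrices. -/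
open Matrix
open scoped Matrix.Norms.L2Operator

/-!
Completing the square at the critical point `x*` gives `H x' - H x* = q·yᵀΣy` with
`y = x' - x*`, and `Σy = (1/(2q))·(Σ - Σ')u` for `u = Σ'⁻¹μ`. Writing `yᵀΣy = (Σy)ᵀΣ⁻¹(Σy)`
bounds the gap by `‖Σ⁻¹‖‖Σ - Σ'‖²‖u‖²/(4q)`, and `Σ' - Γ·1` is positive semidefinite block by
block, so `Γ‖u‖ ≤ ‖Σ'u‖ = ‖μ‖`. The factor `K ≥ 1` only weakens the bound.
-/

namespace Matrix

section BlockDiagonal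

variable {o R : Type*} [Fintype o] [DecidableEq o] {m : o → Type*} [∀ k, Fintype (m k)]

theorem dotProduct_blockDiagonal'_mulVec [NonUnitalNonAssocSemiring R]
    (M : ∀ k, Matrix (m k) (m k) R) (x y : (k : o) × m k → R) :
    x ⬝ᵥ (blockDiagonal' M *ᵥ y) = ∑ k, (fun i ↦ x ⟨k, i⟩) ⬝ᵥ (M k *ᵥ fun i ↦ y ⟨k, i⟩) := by
  simp only [dotProduct, mulVec, ← Finset.univ_sigma_univ, Finset.sum_sigma,
    blockDiagonal'_apply']
  refine Finset.sum_congr rfl fun k _ ↦ Finset.sum_congr rfl fun i _ ↦ ?_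
  rw [Finset.sum_eq_single k (fun l _ hl ↦ by simp [Ne.symm hl]) (by simp)]
  simp

theorem PosSemidef.blockDiagonal' [Ring R] [PartialOrder R] [StarRing R] [AddLeftMono R]
    {M : ∀ k, Matrix (m k) (m k) R} (hM : ∀ k, (M k).PosSemidef) :
    (blockDiagonal' M).PosSemidef :=
  .of_dotProduct_mulVec_nonneg (isHermitian_blockDiagonal'_iff.mpr fun k ↦ (hM k).isHermitian)
    fun x ↦ by
      rw [dotProduct_blockDiagonal'_mulVec]
      exact Finset.sum_nonneg fun k _ ↦ (hM k).dotProduct_mulVec_nonneg _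

theorem posSemidef_blockDiagonal'_sub_smul_one [Ring R] [PartialOrder R] [StarRing R]
    [AddLeftMono R] [∀ k, DecidableEq (m k)] {M : ∀ k, Matrix (m k) (m k) R} {Γ : R}
    (hM : ∀ k, (M k - Γ • 1).PosSemidef) : (blockDiagonal' M - Γ • 1).PosSemidef := by
  rw [← blockDiagonal'_one, ← blockDiagonal'_smul, ← blockDiagonal'_sub]
  exact .blockDiagonal' hM

end BlockDiagonal

theorem PosDef.of_posSemidef_sub_smul_one {ι : Type*} [DecidableEq ι] {A : Matrix ι ι ℝ} {Γ : ℝ}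
    (hA : (A - Γ • 1).PosSemidef) (hΓ : 0 < Γ) : A.PosDef := by
  simpa using PosDef.posSemidef_add hA (PosDef.one.smul hΓ)

variable {ι : Type*} [Fintype ι]

theorem IsSymm.dotProduct_mulVec_comm_s5 {R : Type*} [CommSemiring R] {A : Matrix ι ι R}
    (hA : A.IsSymm) (x y : ι → R) : x ⬝ᵥ A *ᵥ y = y ⬝ᵥ A *ᵥ x := by
  rw [dotProduct_mulVec, ← mulVec_transpose, hA.eq, dotProduct_comm]

theorem quadratic_sub_quadratic_of_mulVec_eq {R : Type*} [CommRing R] {A : Matrix ι ι R}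
    (hA : A.IsSymm) {q : R} {μ x₀ : ι → R} (h₀ : (2 * q) • (A *ᵥ x₀) = μ) (x : ι → R) :
    (q * (x ⬝ᵥ A *ᵥ x) - μ ⬝ᵥ x) - (q * (x₀ ⬝ᵥ A *ᵥ x₀) - μ ⬝ᵥ x₀)
      = q * ((x - x₀) ⬝ᵥ A *ᵥ (x - x₀)) := by
  have hx : (A *ᵥ x₀) ⬝ᵥ x = x₀ ⬝ᵥ A *ᵥ x := by
    rw [dotProduct_comm, hA.dotProduct_mulVec_comm_s5]
  have hx₀ : (A *ᵥ x₀) ⬝ᵥ x₀ = x₀ ⬝ᵥ A *ᵥ x₀ := dotProduct_comm _ _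
  subst h₀
  simp only [mulVec_sub, sub_dotProduct, dotProduct_sub, smul_dotProduct, smul_eq_mul, hx, hx₀,
    hA.dotProduct_mulVec_comm_s5 x x₀]
  ring

theorem mulVec_nonsing_inv_mulVec_cancel [DecidableEq ι] {R : Type*} [CommRing R] {A : Matrix ι ι R}
    (hA : IsUnit A) (x : ι → R) : A *ᵥ (A⁻¹ *ᵥ x) = x := by
  rw [mulVec_mulVec, mul_nonsing_inv _ ((isUnit_iff_isUnit_det A).mp hA), one_mulVec]

theorem dotProduct_le_norm_mul_norm (x y : ι → ℝ) :
    x ⬝ᵥ y ≤ ‖(EuclideanSpace.equiv ι ℝ).symm x‖ * ‖(EuclideanSpace.equiv ι ℝ).symm y‖ := by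
  simpa [EuclideanSpace.inner_toLp_toLp, dotProduct_comm] using
    real_inner_le_norm ((EuclideanSpace.equiv ι ℝ).symm x) ((EuclideanSpace.equiv ι ℝ).symm y)

theorem dotProduct_self_eq_norm_sq (x : ι → ℝ) :
    x ⬝ᵥ x = ‖(EuclideanSpace.equiv ι ℝ).symm x‖ ^ 2 := by
  rw [← real_inner_self_eq_norm_sq]
  rfl

variable [DecidableEq ι]

theorem dotProduct_mulVec_le_l2_opNorm_mul_sq (A : Matrix ι ι ℝ) (x : ι → ℝ) :
    x ⬝ᵥ A *ᵥ x ≤ ‖A‖ * ‖(EuclideanSpace.equiv ι ℝ).symm x‖ ^ 2 :=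
  calc x ⬝ᵥ A *ᵥ x
      ≤ ‖(EuclideanSpace.equiv ι ℝ).symm x‖ * ‖(EuclideanSpace.equiv ι ℝ).symm (A *ᵥ x)‖ :=
        dotProduct_le_norm_mul_norm _ _
    _ ≤ ‖(EuclideanSpace.equiv ι ℝ).symm x‖ * (‖A‖ * ‖(EuclideanSpace.equiv ι ℝ).symm x‖) := by
        gcongr; exact l2_opNorm_mulVec A _
    _ = ‖A‖ * ‖(EuclideanSpace.equiv ι ℝ).symm x‖ ^ 2 := by ring

theorem dotProduct_mulVec_le_l2_opNorm_inv_mul_sq {A : Matrix ι ι ℝ} (hA : A.IsSymm)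
    (hA' : IsUnit A) (x : ι → ℝ) :
    x ⬝ᵥ A *ᵥ x ≤ ‖A⁻¹‖ * ‖(EuclideanSpace.equiv ι ℝ).symm (A *ᵥ x)‖ ^ 2 := by
  have hx : A⁻¹ *ᵥ (A *ᵥ x) = x := by
    rw [mulVec_mulVec, nonsing_inv_mul _ ((isUnit_iff_isUnit_det A).mp hA'), one_mulVec]
  calc x ⬝ᵥ A *ᵥ x = (A *ᵥ x) ⬝ᵥ A⁻¹ *ᵥ (A *ᵥ x) := by
        rw [hx, hA.dotProduct_mulVec_comm_s5, dotProduct_comm]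
    _ ≤ _ := dotProduct_mulVec_le_l2_opNorm_mul_sq _ _

theorem mul_norm_le_norm_mulVec_of_posSemidef_sub_smul_one {A : Matrix ι ι ℝ} {Γ : ℝ}
    (hA : (A - Γ • 1).PosSemidef) (x : ι → ℝ) :
    Γ * ‖(EuclideanSpace.equiv ι ℝ).symm x‖ ≤ ‖(EuclideanSpace.equiv ι ℝ).symm (A *ᵥ x)‖ := by
  have hquad : Γ * ‖(EuclideanSpace.equiv ι ℝ).symm x‖ ^ 2
      ≤ ‖(EuclideanSpace.equiv ι ℝ).symm x‖ * ‖(EuclideanSpace.equiv ι ℝ).symm (A *ᵥ x)‖ := by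
    have h := hA.dotProduct_mulVec_nonneg x
    simp only [star_trivial, sub_mulVec, smul_mulVec, one_mulVec, dotProduct_sub,
      dotProduct_smul, smul_eq_mul] at h
    rw [dotProduct_self_eq_norm_sq] at h
    linarith [dotProduct_le_norm_mul_norm x (A *ᵥ x)]
  rcases (norm_nonneg ((EuclideanSpace.equiv ι ℝ).symm x)).eq_or_lt with h0 | h0
  · rw [← h0, mul_zero]; exact norm_nonneg _
  · nlinarith

end Matrix

theorem markowitz_decomposition_gap_bound_general {K : ℕ} (hK : 1 ≤ K) (m : Fin K → ℕ)
    (S : Matrix ((k : Fin K) × Fin (m k)) ((k : Fin K) × Fin (m k)) ℝ) (hS : S.PosDef)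
    (B : ∀ k : Fin K, Matrix (Fin (m k)) (Fin (m k)) ℝ)
    (Γ : ℝ) (hΓ : 0 < Γ)
    (hEig : ∀ k, (B k - Γ • (1 : Matrix (Fin (m k)) (Fin (m k)) ℝ)).PosSemidef)
    (S' : Matrix ((k : Fin K) × Fin (m k)) ((k : Fin K) × Fin (m k)) ℝ)
    (hS' : S' = Matrix.blockDiagonal' B)
    (μ : ((k : Fin K) × Fin (m k)) → ℝ) (q : ℝ) (hq : 0 < q)
    (H : (((k : Fin K) × Fin (m k)) → ℝ) → ℝ)
    (hH : ∀ x, H x = q * (x ⬝ᵥ S *ᵥ x) - μ ⬝ᵥ x)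
    (xstar x' : ((k : Fin K) × Fin (m k)) → ℝ)
    (hxstar : xstar = (1 / (2 * q)) • (S⁻¹ *ᵥ μ))
    (hx' : x' = (1 / (2 * q)) • (S'⁻¹ *ᵥ μ)) :
    |H xstar - H x'|
      ≤ (‖S⁻¹‖ * ‖(EuclideanSpace.equiv ((k : Fin K) × Fin (m k)) ℝ).symm μ‖ ^ 2 / (4 * q))
          * (K * ‖S - S'‖ / Γ) ^ 2 := by
  set e := (EuclideanSpace.equiv ((k : Fin K) × Fin (m k)) ℝ).symm
  have hSsymm : S.IsSymm := isHermitian_iff_isSymm.mp hS.isHermitian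
  have hS'Γ : (S' - Γ • 1).PosSemidef := hS' ▸ posSemidef_blockDiagonal'_sub_smul_one hEig
  have hS'unit : IsUnit S' := (PosDef.of_posSemidef_sub_smul_one hS'Γ hΓ).isUnit
  set u := S'⁻¹ *ᵥ μ
  have hu : S' *ᵥ u = μ := mulVec_nonsing_inv_mulVec_cancel hS'unit μ
  have hv : S *ᵥ (S⁻¹ *ᵥ μ) = μ := mulVec_nonsing_inv_mulVec_cancel hS.isUnit μ
  have hcrit : (2 * q) • (S *ᵥ xstar) = μ := by
    rw [hxstar, mulVec_smul, hv, smul_smul, mul_one_div_cancel (by positivity), one_smul]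
  have hdiff : S *ᵥ (x' - xstar) = (1 / (2 * q)) • ((S - S') *ᵥ u) := by
    rw [hx', hxstar, mulVec_sub, mulVec_smul, mulVec_smul, hv, sub_mulVec, hu, smul_sub]
  have hgap : |H xstar - H x'| = q * ((x' - xstar) ⬝ᵥ S *ᵥ (x' - xstar)) := by
    rw [abs_sub_comm, hH, hH, quadratic_sub_quadratic_of_mulVec_eq hSsymm hcrit]
    exact abs_of_nonneg <| mul_nonneg hq.le <| by
      simpa using hS.posSemidef.dotProduct_mulVec_nonneg (x' - xstar)
  have hw : ‖e ((S - S') *ᵥ u)‖ ≤ K * ‖S - S'‖ / Γ * ‖e μ‖ := by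
    have hΓu : Γ * ‖e u‖ ≤ ‖e μ‖ := hu ▸ mul_norm_le_norm_mulVec_of_posSemidef_sub_smul_one hS'Γ u
    have hK' : ‖S - S'‖ ≤ K * ‖S - S'‖ :=
      le_mul_of_one_le_left (norm_nonneg _) (by exact_mod_cast hK)
    calc ‖e ((S - S') *ᵥ u)‖ ≤ ‖S - S'‖ * ‖e u‖ := l2_opNorm_mulVec (S - S') (e u)
      _ ≤ K * ‖S - S'‖ * (‖e μ‖ / Γ) :=
        mul_le_mul hK' ((le_div_iff₀' hΓ).mpr hΓu) (norm_nonneg _) (by positivity)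
      _ = K * ‖S - S'‖ / Γ * ‖e μ‖ := by ring
  calc |H xstar - H x'| ≤ q * (‖S⁻¹‖ * ‖e (S *ᵥ (x' - xstar))‖ ^ 2) := by
        rw [hgap]; gcongr; exact dotProduct_mulVec_le_l2_opNorm_inv_mul_sq hSsymm hS.isUnit _
    _ = ‖S⁻¹‖ / (4 * q) * ‖e ((S - S') *ᵥ u)‖ ^ 2 := by
        rw [hdiff, map_smul, norm_smul, Real.norm_of_nonneg (by positivity)]
        field_simp
        ring
    _ ≤ ‖S⁻¹‖ / (4 * q) * (K * ‖S - S'‖ / Γ * ‖e μ‖) ^ 2 := by gcongr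
    _ = _ := by ring

/-- Theorem 1 (Gap between optimal direct and decomposed solutions): if `Σ` is symmetric positive
definite, `Σ' = Diag(Σ'₁, …, Σ'_K)` is block diagonal with `K ≥ 1` symmetric positive definite
blocks whose eigenvalues are all at least `Γ > 0`, `x* = (1/(2q))·Σ⁻¹μ` minimizes
`H(x) = q·xᵀΣx − μᵀx` and `x' = (1/(2q))·(Σ')⁻¹μ` minimizes the decomposed objective, then
`|H(x*) − H(x')| ≤ (‖Σ⁻¹‖·‖μ‖²/(4q))·(K·‖Σ − Σ'‖/Γ)²`. -/
theorem markowitz_decomposition_gap_bound {K : ℕ} (hK : 1 ≤ K) (m : Fin K → ℕ)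
    (S : Matrix ((k : Fin K) × Fin (m k)) ((k : Fin K) × Fin (m k)) ℝ) (hS : S.PosDef)
    (B : ∀ k : Fin K, Matrix (Fin (m k)) (Fin (m k)) ℝ)
    (hB : ∀ k, (B k).PosDef)
    (Γ : ℝ) (hΓ : 0 < Γ)
    (hEig : ∀ k, (B k - Γ • (1 : Matrix (Fin (m k)) (Fin (m k)) ℝ)).PosSemidef)
    (S' : Matrix ((k : Fin K) × Fin (m k)) ((k : Fin K) × Fin (m k)) ℝ)
    (hS' : S' = Matrix.blockDiagonal' B)
    (μ : ((k : Fin K) × Fin (m k)) → ℝ) (q : ℝ) (hq : 0 < q)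
    (H : (((k : Fin K) × Fin (m k)) → ℝ) → ℝ)
    (hH : ∀ x, H x = q * (x ⬝ᵥ S *ᵥ x) - μ ⬝ᵥ x)
    (xstar x' : ((k : Fin K) × Fin (m k)) → ℝ)
    (hxstar : xstar = (1 / (2 * q)) • (S⁻¹ *ᵥ μ))
    (hx' : x' = (1 / (2 * q)) • (S'⁻¹ *ᵥ μ)) :
    |H xstar - H x'|
      ≤ (‖S⁻¹‖ * ‖(EuclideanSpace.equiv ((k : Fin K) × Fin (m k)) ℝ).symm μ‖ ^ 2 / (4 * q))
          * (K * ‖S - S'‖ / Γ) ^ 2 :=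
  markowitz_decomposition_gap_bound_general hK m S hS B Γ hΓ hEig S' hS' μ q hq H hH xstar x' hxstar
    hx'
end
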